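/- arXiv:0806.4423 — 3 statements merged into one kernel-verified Lean document; each statement's English description precedes it below -/
import Mathlib

section
/- If x, y ∈ ℝ^D have non-negative entries, then (∑ x_i^5)(∑ y_i^3) + (∑ x_i^3)(∑ y_i^5) ≥ (∑ x_i^4)(∑ y_i^4). -/
open Finset

/-! The pointwise inequality `2 a⁴ b⁴ ≤ a⁵ b³ + a³ b⁵` is AM-GM, i.e. `a³ b³ (a - b)² ≥ 0`;
expanding each product of sums into a double sum over pairs `(i, j)` and applying it to
`a = x i`, `b = y j` gives the theorem even with a factor `2` on the left. -/

section

variable {R : Type*} [CommRing R] [LinearOrder R] [IsStrictOrderedRing R]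

theorem two_mul_pow_succ_mul_pow_succ_le {a b : R} (ha : 0 ≤ a) (hb : 0 ≤ b) (m : ℕ) :
    2 * (a ^ (m + 1) * b ^ (m + 1)) ≤ a ^ (m + 2) * b ^ m + a ^ m * b ^ (m + 2) := by
  have key : 0 ≤ (a * b) ^ m * (a - b) ^ 2 := by positivity
  linarith [show (a * b) ^ m * (a - b) ^ 2
    = a ^ (m + 2) * b ^ m + a ^ m * b ^ (m + 2) - 2 * (a ^ (m + 1) * b ^ (m + 1)) by ring]

theorem two_mul_sum_pow_succ_mul_sum_pow_succ_le {ι : Type*} (s : Finset ι) {f g : ι → R}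
    (hf : ∀ i ∈ s, 0 ≤ f i) (hg : ∀ i ∈ s, 0 ≤ g i) (m : ℕ) :
    2 * ((∑ i ∈ s, f i ^ (m + 1)) * ∑ i ∈ s, g i ^ (m + 1)) ≤
      (∑ i ∈ s, f i ^ (m + 2)) * (∑ i ∈ s, g i ^ m) +
        (∑ i ∈ s, f i ^ m) * ∑ i ∈ s, g i ^ (m + 2) := by
  rw [sum_mul_sum, sum_mul_sum, sum_mul_sum, mul_sum, ← sum_add_distrib]
  refine sum_le_sum fun i hi => ?_
  rw [mul_sum, ← sum_add_distrib]
  exact sum_le_sum fun j hj => two_mul_pow_succ_mul_pow_succ_le (hf i hi) (hg j hj) m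

end

theorem marginal_power_ineq (D : ℕ) (x y : Fin D → ℝ)
    (hx : ∀ i, 0 ≤ x i) (hy : ∀ i, 0 ≤ y i) :
    (∑ i, (x i) ^ 4) * (∑ i, (y i) ^ 4) ≤
      (∑ i, (x i) ^ 5) * (∑ i, (y i) ^ 3) + (∑ i, (x i) ^ 3) * (∑ i, (y i) ^ 5) := by
  have h := two_mul_sum_pow_succ_mul_sum_pow_succ_le univ (fun i _ => hx i) (fun i _ => hy i) 3
  have h_nonneg : 0 ≤ (∑ i, x i ^ 4) * ∑ i, y i ^ 4 :=
    mul_nonneg (sum_nonneg fun i _ => by positivity) (sum_nonneg fun i _ => by positivity)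
  linarith
end

section
/- Let r_1, ..., r_D be i.i.d. standard normal random variables and x, y ∈ ℝ^D. Define u_1 = ∑ x_i r_i, u_2 = ∑ x_i^2 r_i, u_3 = ∑ x_i^3 r_i, v_1 = ∑ y_i r_i, v_2 = ∑ y_i^2 r_i, v_3 = ∑ y_i^3 r_i, and the single-sample estimator X = ∑ x_i^4 + ∑ y_i^4 + 6 u_2 v_2 - 4 u_3 v_1 - 4 u_1 v_3. Then E[X] = ∑_{i=1}^D (x_i - y_i)^4. -/
/-!
Expanding both factors, `E[(∑ aᵢ rᵢ)(∑ bⱼ rⱼ)] = ∑ᵢ aᵢ bᵢ` because independent centred variables with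
unit second moment are orthonormal in `L²`. Hence the expectation of the estimator is
`∑ xᵢ⁴ + ∑ yᵢ⁴ + 6 ∑ xᵢ²yᵢ² - 4 ∑ xᵢ³yᵢ - 4 ∑ xᵢyᵢ³`, which is `∑ (xᵢ - yᵢ)⁴` by the binomial theorem.
-/

open Finset MeasureTheory ProbabilityTheory

lemma sum_mul_sum_eq_sum_sum_mul {ι : Type*} (s : Finset ι) (a b u : ι → ℝ) :
    (∑ i ∈ s, a i * u i) * (∑ j ∈ s, b j * u j) = ∑ i ∈ s, ∑ j ∈ s, a i * b j * (u i * u j) := by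
  simp only [sum_mul_sum]
  exact sum_congr rfl fun i _ => sum_congr rfl fun j _ => by ring

section SecondMoments

variable {Ω ι : Type*} [MeasurableSpace Ω] {μ : Measure Ω} [Fintype ι] {r : ι → Ω → ℝ}

lemma memLp_two_of_integral_sq_ne_zero {f : Ω → ℝ} (hf : AEStronglyMeasurable f μ)
    (h : ∫ ω, f ω ^ 2 ∂μ ≠ 0) : MemLp f 2 μ :=
  (memLp_two_iff_integrable_sq hf).2 (Integrable.of_integral_ne_zero h)

lemma integrable_sum_mul_sum (hint : ∀ i j, Integrable (fun ω => r i ω * r j ω) μ)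
    (a b : ι → ℝ) : Integrable (fun ω => (∑ i, a i * r i ω) * (∑ j, b j * r j ω)) μ := by
  simp only [sum_mul_sum_eq_sum_sum_mul]
  exact integrable_finsetSum _ fun i _ => integrable_finsetSum _ fun j _ => (hint i j).const_mul _

lemma integral_sum_mul_sum (hint : ∀ i j, Integrable (fun ω => r i ω * r j ω) μ)
    (a b : ι → ℝ) :
    ∫ ω, (∑ i, a i * r i ω) * (∑ j, b j * r j ω) ∂μ
      = ∑ i, ∑ j, a i * b j * ∫ ω, r i ω * r j ω ∂μ := by
  simp only [sum_mul_sum_eq_sum_sum_mul]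
  rw [integral_finsetSum _ fun i _ => integrable_finsetSum _ fun j _ => (hint i j).const_mul _]
  refine sum_congr rfl fun i _ => ?_
  rw [integral_finsetSum _ fun j _ => (hint i j).const_mul _]
  simp only [integral_const_mul]

lemma integral_sum_mul_sum_of_orthonormal (hint : ∀ i j, Integrable (fun ω => r i ω * r j ω) μ)
    (horth : Pairwise fun i j => ∫ ω, r i ω * r j ω ∂μ = 0)
    (hnorm : ∀ i, ∫ ω, r i ω ^ 2 ∂μ = 1) (a b : ι → ℝ) :
    ∫ ω, (∑ i, a i * r i ω) * (∑ j, b j * r j ω) ∂μ = ∑ i, a i * b i := by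
  rw [integral_sum_mul_sum hint]
  refine sum_congr rfl fun i _ => ?_
  rw [Fintype.sum_eq_single i fun j hji => by rw [horth hji.symm, mul_zero]]
  simp only [← pow_two, hnorm, mul_one]

lemma integral_mul_eq_zero_of_indepFun {X Y : Ω → ℝ} (hXY : IndepFun X Y μ)
    (hX : AEStronglyMeasurable X μ) (hY : AEStronglyMeasurable Y μ) (hX0 : ∫ ω, X ω ∂μ = 0) :
    ∫ ω, X ω * Y ω ∂μ = 0 := by
  simpa [hX0] using hXY.integral_mul_eq_mul_integral hX hY

end SecondMoments

theorem l4_estimator_unbiased_general {Ω : Type*} [MeasurableSpace Ω]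
    (μ : Measure Ω) [IsProbabilityMeasure μ]
    (D : ℕ) (r : Fin D → Ω → ℝ) (x y : Fin D → ℝ)
    (hmeas : ∀ i, Measurable (r i))
    (hindep : iIndepFun r μ)
    (h1 : ∀ i, ∫ ω, r i ω ∂μ = 0)
    (h2 : ∀ i, ∫ ω, (r i ω) ^ 2 ∂μ = 1) :
    ∫ ω, (∑ i, (x i) ^ 4 + ∑ i, (y i) ^ 4
        + 6 * ((∑ i, (x i) ^ 2 * r i ω) * (∑ i, (y i) ^ 2 * r i ω))
        - 4 * ((∑ i, (x i) ^ 3 * r i ω) * (∑ i, y i * r i ω))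
        - 4 * ((∑ i, x i * r i ω) * (∑ i, (y i) ^ 3 * r i ω))) ∂μ
      = ∑ i, (x i - y i) ^ 4 := by
  have hL2 i : MemLp (r i) 2 μ :=
    memLp_two_of_integral_sq_ne_zero (hmeas i).aestronglyMeasurable (by simp [h2])
  have hint i j : Integrable (fun ω => r i ω * r j ω) μ := (hL2 i).integrable_mul (hL2 j)
  have horth : Pairwise fun i j => ∫ ω, r i ω * r j ω ∂μ = 0 := fun i j hij =>
    integral_mul_eq_zero_of_indepFun (hindep.indepFun hij) (hmeas i).aestronglyMeasurable
      (hmeas j).aestronglyMeasurable (h1 i)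
  have hprod := integrable_sum_mul_sum hint
  rw [integral_sub, integral_sub, integral_add, integral_const, integral_const_mul,
    integral_const_mul, integral_const_mul]
  · simp only [integral_sum_mul_sum_of_orthonormal hint horth h2, probReal_univ, one_smul]
    simp only [mul_sum, ← sum_add_distrib, ← sum_sub_distrib]
    exact sum_congr rfl fun i _ => by ring
  all_goals fun_prop (disch := exact hprod _ _)

theorem l4_estimator_unbiased {Ω : Type*} [MeasurableSpace Ω]
    (μ : Measure Ω) [IsProbabilityMeasure μ]
    (D : ℕ) (r : Fin D → Ω → ℝ) (x y : Fin D → ℝ)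
    (hmeas : ∀ i, Measurable (r i))
    (hindep : iIndepFun r μ)
    (h1 : ∀ i, ∫ ω, r i ω ∂μ = 0)
    (h2 : ∀ i, ∫ ω, (r i ω) ^ 2 ∂μ = 1)
    (h3 : ∀ i, ∫ ω, (r i ω) ^ 3 ∂μ = 0)
    (h4 : ∀ i, ∫ ω, (r i ω) ^ 4 ∂μ = 3) :
    ∫ ω, (∑ i, (x i) ^ 4 + ∑ i, (y i) ^ 4
        + 6 * ((∑ i, (x i) ^ 2 * r i ω) * (∑ i, (y i) ^ 2 * r i ω))
        - 4 * ((∑ i, (x i) ^ 3 * r i ω) * (∑ i, y i * r i ω))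
        - 4 * ((∑ i, x i * r i ω) * (∑ i, (y i) ^ 3 * r i ω))) ∂μ
      = ∑ i, (x i - y i) ^ 4 :=
  l4_estimator_unbiased_general μ D r x y hmeas hindep h1 h2
end

section
/- Let r^(a), r^(b), r^(c) be three independent D-dimensional random vectors, each with i.i.d. standard normal entries, and let x, y ∈ ℝ^D. Define u_2 = ∑ x_i^2 r_i^(a), v_2 = ∑ y_i^2 r_i^(a), u_3 = ∑ x_i^3 r_i^(b), v_1 = ∑ y_i r_i^(b), u_1 = ∑ x_i r_i^(c), v_3 = ∑ y_i^3 r_i^(c). The variance of W = 6 u_2 v_2 - 4 u_3 v_1 - 4 u_1 v_3 equals 36[(∑x_i^4)(∑y_i^4) + (∑x_i^2 y_i^2)^2] + 16[(∑x_i^6)(∑y_i^2) + (∑x_i^3 y_i)^2] + 16[(∑x_i^2)(∑y_i^6) + (∑x_i y_i^3)^2]. -/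
/-!
Each of the three products depends on a single block of the noise, and the blocks are
independent, so the variance splits as `36 Var(u₂v₂) + 16 Var(u₃v₁) + 16 Var(u₁v₃)`.
For linear forms `u = ∑ aᵢ gᵢ`, `v = ∑ bᵢ gᵢ` in independent variables with moments
`0, 1, 0, 3`, induction on the number of variables (expanding `(U + a g)ⁿ` binomially) gives
`E u² = ‖a‖²` and `E u⁴ = 3‖a‖⁴`. Polarization then yields `E uv = ⟪a, b⟫` and
`E u²v² = ‖a‖²‖b‖² + 2⟪a, b⟫²`, hence `Var(uv) = ‖a‖²‖b‖² + ⟪a, b⟫²`.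
-/

open Finset MeasureTheory ProbabilityTheory

section

variable {Ω : Type*} [MeasurableSpace Ω] {μ : Measure Ω}

lemma MeasureTheory.MemLp.integrable_pow_of_le [IsFiniteMeasure μ] {X : Ω → ℝ} {n k : ℕ}
    (hX : MemLp X n μ) (hk : k ≤ n) : Integrable (fun ω => X ω ^ k) μ := by
  have := (hX.mono_exponent (by exact_mod_cast hk)).integrable_norm_pow'
  exact this.mono' (hX.1.pow k) (ae_of_all _ fun ω => by simp [norm_pow])

lemma memLp_of_integral_pow_ne_zero {X : Ω → ℝ} {n : ℕ} (hn : Even n)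
    (hX : AEStronglyMeasurable X μ) (h : ∫ ω, X ω ^ n ∂μ ≠ 0) : MemLp X n μ := by
  rcases eq_or_ne n 0 with rfl | hn0
  · simpa using hX
  rw [← integrable_norm_rpow_iff hX (by simpa using hn0) (by simp)]
  refine (Integrable.of_integral_ne_zero h).congr (ae_of_all _ fun ω => ?_)
  simp [Real.norm_eq_abs, hn.pow_abs]

lemma MeasureTheory.MemLp.mul_of_memLp_four [IsFiniteMeasure μ] {X Y : Ω → ℝ}
    (hX : MemLp X (4 : ℕ) μ) (hY : MemLp Y (4 : ℕ) μ) : MemLp (fun ω => X ω * Y ω) 2 μ := by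
  refine (memLp_two_iff_integrable_sq (hX.1.mul hY.1)).2 ?_
  refine ((hX.integrable_pow_of_le le_rfl).add (hY.integrable_pow_of_le le_rfl)).mono'
    ((hX.1.mul hY.1).pow 2) (ae_of_all _ fun ω => ?_)
  rw [Real.norm_eq_abs, abs_of_nonneg (sq_nonneg _), Pi.mul_apply, Pi.add_apply]
  nlinarith [sq_nonneg (X ω ^ 2 - Y ω ^ 2)]

lemma ProbabilityTheory.IndepFun.integral_add_pow [IsFiniteMeasure μ] {X Y : Ω → ℝ}
    (hXY : X ⟂ᵢ[μ] Y) {n : ℕ} (hX : MemLp X n μ) (hY : MemLp Y n μ) :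
    ∫ ω, (X ω + Y ω) ^ n ∂μ
      = ∑ k ∈ range (n + 1), (∫ ω, X ω ^ k ∂μ) * (∫ ω, Y ω ^ (n - k) ∂μ) * n.choose k := by
  have hpow (k m : ℕ) : (fun ω => X ω ^ k) ⟂ᵢ[μ] (fun ω => Y ω ^ m) :=
    hXY.comp (measurable_id.pow_const k) (measurable_id.pow_const m)
  have hint (k : ℕ) (hk : k ∈ range (n + 1)) :
      Integrable (fun ω => X ω ^ k * Y ω ^ (n - k) * n.choose k) μ :=
    ((hpow k (n - k)).integrable_mul (hX.integrable_pow_of_le (mem_range_succ_iff.mp hk))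
      (hY.integrable_pow_of_le (n.sub_le k))).mul_const _
  simp_rw [add_pow]
  rw [integral_finsetSum _ hint]
  refine sum_congr rfl fun k _ => ?_
  rw [integral_mul_const, (hpow k (n - k)).integral_fun_mul_eq_mul_integral
    (hX.1.pow k) (hY.1.pow (n - k))]

lemma ProbabilityTheory.iIndepFun.indepFun_slices {κ ι β : Type*} [Fintype ι]
    [MeasurableSpace β] {r : κ → ι → Ω → β} (hindep : iIndepFun (fun p : κ × ι => r p.1 p.2) μ)
    (hmeas : ∀ j i, Measurable (r j i)) {j k : κ} (hjk : j ≠ k) :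
    (fun ω i => r j i ω) ⟂ᵢ[μ] (fun ω i => r k i ω) := by
  classical
  have hdisj : Disjoint ({j} ×ˢ univ : Finset (κ × ι)) ({k} ×ˢ univ) := by
    simp [disjoint_left, hjk.symm]
  have hmem (l : κ) (i : ι) : (l, i) ∈ ({l} ×ˢ univ : Finset (κ × ι)) := by simp
  exact (hindep.indepFun_finset _ _ hdisj fun p => hmeas p.1 p.2).comp
    (φ := fun v i => v ⟨(j, i), hmem j i⟩) (ψ := fun v i => v ⟨(k, i), hmem k i⟩)
    (by fun_prop) (by fun_prop)

section LinearForms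

variable {ι : Type*} {g : ι → Ω → ℝ}

lemma ProbabilityTheory.iIndepFun.indepFun_sum_mul_of_notMem (hindep : iIndepFun g μ)
    (hmeas : ∀ i, Measurable (g i)) (a : ι → ℝ) {s : Finset ι} {t : ι} (ht : t ∉ s) :
    (fun ω => ∑ i ∈ s, a i * g i ω) ⟂ᵢ[μ] (fun ω => a t * g t ω) := by
  have h := (hindep.comp (fun i x => a i * x) fun i => measurable_const_mul (a i))
    |>.indepFun_finsetSum_of_notMem (fun i => (hmeas i).const_mul (a i)) ht
  simpa only [Finset.sum_fn, Function.comp_def] using h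

lemma memLp_sum_mul {p : ENNReal} (hL : ∀ i, MemLp (g i) p μ) (s : Finset ι) (a : ι → ℝ) :
    MemLp (fun ω => ∑ i ∈ s, a i * g i ω) p μ :=
  memLp_finsetSum s fun i _ => (hL i).const_mul (a i)

variable [IsProbabilityMeasure μ]

lemma integrable_sum_mul_pow (hL : ∀ i, MemLp (g i) 4 μ) (s : Finset ι) (a : ι → ℝ) {k : ℕ}
    (hk : k ≤ 4) : Integrable (fun ω => (∑ i ∈ s, a i * g i ω) ^ k) μ :=
  MemLp.integrable_pow_of_le (n := 4) (by exact_mod_cast memLp_sum_mul hL s a) hk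

lemma memLp_sum_mul_mul_sum_mul (hL : ∀ i, MemLp (g i) 4 μ) (s : Finset ι) (a b : ι → ℝ) :
    MemLp (fun ω => (∑ i ∈ s, a i * g i ω) * (∑ i ∈ s, b i * g i ω)) 2 μ :=
  MemLp.mul_of_memLp_four (by exact_mod_cast memLp_sum_mul hL s a)
    (by exact_mod_cast memLp_sum_mul hL s b)

variable (hindep : iIndepFun g μ) (hmeas : ∀ i, Measurable (g i)) (hL : ∀ i, MemLp (g i) 4 μ)
  (h1 : ∀ i, ∫ ω, g i ω ∂μ = 0) (h2 : ∀ i, ∫ ω, g i ω ^ 2 ∂μ = 1)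
  (h3 : ∀ i, ∫ ω, g i ω ^ 3 ∂μ = 0) (h4 : ∀ i, ∫ ω, g i ω ^ 4 ∂μ = 3)
include hindep hmeas hL h1 h2

lemma integral_sum_mul_sq (s : Finset ι) (a : ι → ℝ) :
    ∫ ω, (∑ i ∈ s, a i * g i ω) ^ 2 ∂μ = ∑ i ∈ s, a i ^ 2 := by
  classical
  induction s using Finset.induction_on with
  | empty => simp
  | insert t s ht ih =>
    have hL2 i : MemLp (g i) (2 : ℕ) μ := (hL i).mono_exponent (by norm_num)
    have := (hindep.indepFun_sum_mul_of_notMem hmeas a ht).integral_add_pow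
      (memLp_sum_mul hL2 s a) ((hL2 t).const_mul (a t))
    simp_rw [sum_insert ht, add_comm (a t * g t _), this]
    simp [sum_range_succ, mul_pow, integral_const_mul, h1, h2, ih]

include h3 h4 in
lemma integral_sum_mul_pow_four (s : Finset ι) (a : ι → ℝ) :
    ∫ ω, (∑ i ∈ s, a i * g i ω) ^ 4 ∂μ = 3 * (∑ i ∈ s, a i ^ 2) ^ 2 := by
  classical
  induction s using Finset.induction_on with
  | empty => simp
  | insert t s ht ih =>
    have := (hindep.indepFun_sum_mul_of_notMem hmeas a ht).integral_add_pow (n := 4)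
      (by exact_mod_cast memLp_sum_mul hL s a) (by exact_mod_cast (hL t).const_mul (a t))
    simp_rw [sum_insert ht, add_comm (a t * g t _), this]
    simp only [Nat.reduceAdd, mul_pow, integral_const_mul, sum_range_succ, range_one,
      sum_singleton, pow_zero, integral_const, probReal_univ, smul_eq_mul, mul_one, tsub_zero, h4,
      one_mul, Nat.choose, Nat.cast_one, pow_one, Nat.add_one_sub_one, h3, mul_zero, add_zero,
      Nat.cast_ofNat, zero_mul, integral_sum_mul_sq hindep hmeas hL h1 h2, Nat.reduceSub, h2, h1,
      ih, tsub_self]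
    ring

lemma integral_sum_mul_mul_sum_mul (s : Finset ι) (a b : ι → ℝ) :
    ∫ ω, (∑ i ∈ s, a i * g i ω) * (∑ i ∈ s, b i * g i ω) ∂μ = ∑ i ∈ s, a i * b i := by
  have hpol ω : (∑ i ∈ s, a i * g i ω) * (∑ i ∈ s, b i * g i ω)
      = ((∑ i ∈ s, (a i + b i) * g i ω) ^ 2 - (∑ i ∈ s, (a i - b i) * g i ω) ^ 2) / 4 := by
    simp only [add_mul, sub_mul, sum_add_distrib, sum_sub_distrib]
    ring
  simp_rw [hpol]
  rw [integral_div, integral_sub (integrable_sum_mul_pow hL s _ (by norm_num))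
    (integrable_sum_mul_pow hL s _ (by norm_num)), integral_sum_mul_sq hindep hmeas hL h1 h2,
    integral_sum_mul_sq hindep hmeas hL h1 h2, ← sum_sub_distrib, sum_div]
  exact sum_congr rfl fun i _ => by ring

include h3 h4 in
lemma integral_sum_mul_sq_mul_sum_mul_sq (s : Finset ι) (a b : ι → ℝ) :
    ∫ ω, (∑ i ∈ s, a i * g i ω) ^ 2 * (∑ i ∈ s, b i * g i ω) ^ 2 ∂μ
      = (∑ i ∈ s, a i ^ 2) * (∑ i ∈ s, b i ^ 2) + 2 * (∑ i ∈ s, a i * b i) ^ 2 := by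
  have hpol ω : (∑ i ∈ s, a i * g i ω) ^ 2 * (∑ i ∈ s, b i * g i ω) ^ 2
      = ((∑ i ∈ s, (a i + b i) * g i ω) ^ 4 + (∑ i ∈ s, (a i - b i) * g i ω) ^ 4
          - 2 * (∑ i ∈ s, a i * g i ω) ^ 4 - 2 * (∑ i ∈ s, b i * g i ω) ^ 4) / 12 := by
    simp only [add_mul, sub_mul, sum_add_distrib, sum_sub_distrib]
    ring
  have hint (c : ι → ℝ) := integrable_sum_mul_pow hL s c (le_refl 4)
  simp_rw [hpol]
  rw [integral_div, integral_sub, integral_sub, integral_add, integral_const_mul,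
    integral_const_mul]
  rotate_left
  · exact hint _
  · exact hint _
  · exact (hint _).add (hint _)
  · exact (hint a).const_mul 2
  · exact ((hint _).add (hint _)).sub ((hint a).const_mul 2)
  · exact (hint b).const_mul 2
  simp only [integral_sum_mul_pow_four hindep hmeas hL h1 h2 h3 h4, add_sq, sub_sq,
    sum_add_distrib, sum_sub_distrib, mul_assoc, ← mul_sum]
  ring

include h3 h4 in
lemma variance_sum_mul_mul_sum_mul (s : Finset ι) (a b : ι → ℝ) :
    variance (fun ω => (∑ i ∈ s, a i * g i ω) * (∑ i ∈ s, b i * g i ω)) μ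
      = (∑ i ∈ s, a i ^ 2) * (∑ i ∈ s, b i ^ 2) + (∑ i ∈ s, a i * b i) ^ 2 := by
  rw [variance_eq_sub (memLp_sum_mul_mul_sum_mul hL s a b)]
  simp only [Pi.pow_apply, mul_pow]
  rw [integral_sum_mul_sq_mul_sum_mul_sq hindep hmeas hL h1 h2 h3 h4,
    integral_sum_mul_mul_sum_mul hindep hmeas hL h1 h2]
  ring

end LinearForms

end

theorem l4_alternative_variance {Ω : Type*} [MeasurableSpace Ω]
    (μ : Measure Ω) [IsProbabilityMeasure μ]
    (D : ℕ) (r : Fin 3 → Fin D → Ω → ℝ) (x y : Fin D → ℝ)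
    (hmeas : ∀ j i, Measurable (r j i))
    (hindep : iIndepFun
      (fun p : Fin 3 × Fin D => r p.1 p.2) μ)
    (h1 : ∀ j i, ∫ ω, r j i ω ∂μ = 0)
    (h2 : ∀ j i, ∫ ω, (r j i ω) ^ 2 ∂μ = 1)
    (h3 : ∀ j i, ∫ ω, (r j i ω) ^ 3 ∂μ = 0)
    (h4 : ∀ j i, ∫ ω, (r j i ω) ^ 4 ∂μ = 3) :
    variance (fun ω =>
        6 * ((∑ i, (x i) ^ 2 * r 0 i ω) * (∑ i, (y i) ^ 2 * r 0 i ω))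
          - 4 * ((∑ i, (x i) ^ 3 * r 1 i ω) * (∑ i, y i * r 1 i ω))
          - 4 * ((∑ i, x i * r 2 i ω) * (∑ i, (y i) ^ 3 * r 2 i ω))) μ
      = 36 * ((∑ i, (x i) ^ 4) * (∑ i, (y i) ^ 4) + (∑ i, (x i) ^ 2 * (y i) ^ 2) ^ 2)
        + 16 * ((∑ i, (x i) ^ 6) * (∑ i, (y i) ^ 2) + (∑ i, (x i) ^ 3 * y i) ^ 2)
        + 16 * ((∑ i, (x i) ^ 2) * (∑ i, (y i) ^ 6) + (∑ i, x i * (y i) ^ 3) ^ 2) := by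
  have hrow j : iIndepFun (r j) μ :=
    hindep.precomp (g := fun i => (j, i)) fun i i' h => (Prod.ext_iff.1 h).2
  have hL j i : MemLp (r j i) 4 μ := by
    exact_mod_cast memLp_of_integral_pow_ne_zero (n := 4) (by decide)
      (hmeas j i).aestronglyMeasurable (by rw [h4]; norm_num)
  let a : Fin 3 → Fin D → ℝ := ![fun i => x i ^ 2, fun i => x i ^ 3, x]
  let b : Fin 3 → Fin D → ℝ := ![fun i => y i ^ 2, y, fun i => y i ^ 3]
  let c : Fin 3 → ℝ := ![6, -4, -4]
  let Q (j : Fin 3) (v : Fin D → ℝ) : ℝ := c j * ((∑ i, a j i * v i) * (∑ i, b j i * v i))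
  let P (j : Fin 3) (ω : Ω) : ℝ := Q j fun i => r j i ω
  have hW : (fun ω => 6 * ((∑ i, (x i) ^ 2 * r 0 i ω) * (∑ i, (y i) ^ 2 * r 0 i ω))
      - 4 * ((∑ i, (x i) ^ 3 * r 1 i ω) * (∑ i, y i * r 1 i ω))
      - 4 * ((∑ i, x i * r 2 i ω) * (∑ i, (y i) ^ 3 * r 2 i ω))) = ∑ j, P j := by
    ext ω
    simp only [Finset.sum_apply, Fin.sum_univ_three, Matrix.cons_val_zero, Matrix.cons_val_one,
      Matrix.cons_val, neg_mul, P, Q, c, a, b]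
    ring
  have hP_indep : Set.Pairwise (univ : Finset (Fin 3)) fun j k => P j ⟂ᵢ[μ] P k :=
    fun j _ k _ hjk => (hindep.indepFun_slices hmeas hjk).comp (φ := Q j) (ψ := Q k)
      (by simp only [Q]; fun_prop) (by simp only [Q]; fun_prop)
  rw [hW, IndepFun.variance_sum (fun j _ => (memLp_sum_mul_mul_sum_mul (hL j) _ _ _).const_mul _)
    hP_indep]
  simp only [variance_const_mul,
    variance_sum_mul_mul_sum_mul (hrow _) (hmeas _) (hL _) (h1 _) (h2 _) (h3 _) (h4 _)]
  simp only [Fin.sum_univ_three, Matrix.cons_val_zero, Matrix.cons_val_one, Matrix.cons_val,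
    ← pow_mul, Nat.reduceMul, even_two, Even.neg_pow, c, a, b]
  ring
end
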